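/- arXiv:2007.14649 — 3 statements merged into one kernel-verified Lean document; each statement's English description precedes it below -/
import Mathlib

section
/- Let D be a quasi quantum Poisson algebra that is non-singular and quasi-distinguishing, with basis algebra A = D^0. Then every Ψ in the centralizer C(D) of ad(Z(A)) respects the filtration, i.e., Ψ(D^i) ⊆ D^i for all i ≥ 0. -/
attribute [local instance 100] LieRing.ofAssociativeRing

/-!
Quasi-distinguishing says that the filtration is determined by `ad Z(A)` alone: `D⁰` is the
centralizer of `Z(A)` and `Dⁱ⁺¹` is the set of elements that `ad Z(A)` maps into `Dⁱ`. An operator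
commuting with every `ad u` therefore preserves it, by induction on `i`:
`⁅Ψ T, u⁆ = Ψ ⁅T, u⁆` lies wherever `⁅T, u⁆` does.
-/

theorem mapsTo_of_commute_ad {L : Type*} [LieRing L] (F : ℕ → Set L) (S : Set L) (Ψ : L →+ L)
    (hΨ : ∀ T, ∀ u ∈ S, Ψ ⁅T, u⁆ = ⁅Ψ T, u⁆)
    (hF₀ : ∀ T ∈ F 0, ∀ u ∈ S, ⁅T, u⁆ = 0)
    (hcentralizer : ∀ T, (∀ u ∈ S, ⁅T, u⁆ = 0) → T ∈ F 0)
    (hsucc : ∀ i T, (∀ u ∈ S, ⁅T, u⁆ ∈ F i) ↔ T ∈ F (i + 1)) :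
    ∀ i, Set.MapsTo Ψ (F i) (F i) := by
  intro i
  induction i with
  | zero =>
    intro T hT
    refine hcentralizer _ fun u hu => ?_
    rw [← hΨ T u hu, hF₀ T hT u hu, map_zero]
  | succ i ih =>
    intro T hT
    refine (hsucc i (Ψ T)).mp fun u hu => ?_
    rw [← hΨ T u hu]
    exact ih ((hsucc i T).mpr hT u hu)

theorem statement2_general {K D : Type*} [Field K] [Ring D] [Algebra K D]
    (F : ℕ → Submodule K D)
    -- the center `Z(A)` of the basis algebra `A = D⁰`
    (ZA : Set D) (hZA : ZA = {u : D | u ∈ F 0 ∧ ∀ a ∈ F 0, u * a = a * u})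
    -- quasi-distinguishing
    (hqd0 : ∀ T : D, (∀ u ∈ ZA, ⁅T, u⁆ = 0) → T ∈ F 0)
    (hqd : ∀ i : ℕ, ∀ T : D, (∀ u ∈ ZA, ⁅T, u⁆ ∈ F i) ↔ T ∈ F (i + 1))
    -- an element of the centralizer `C(D)` of `ad(Z(A))`
    (Ψ : D →ₗ[K] D)
    (hΨ : ∀ T : D, ∀ u ∈ ZA, Ψ ⁅T, u⁆ = ⁅Ψ T, u⁆) :
    ∀ i : ℕ, ∀ T ∈ F i, Ψ T ∈ F i := by
  have hA : ∀ T ∈ F 0, ∀ u ∈ ZA, ⁅T, u⁆ = 0 := by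
    intro T hT u hu
    rw [hZA] at hu
    rw [Ring.lie_def, hu.2 T hT, sub_self]
  exact fun i T hT =>
    mapsTo_of_commute_ad (fun i => F i) ZA Ψ.toAddMonoidHom hΨ hA hqd0 hqd i hT

/-- Let `D = ⋃ᵢ Dⁱ` be a quasi quantum Poisson algebra (a filtered associative unital
algebra over a field `K` of characteristic `0` with `Dⁱ ⊆ Dⁱ⁺¹`, `Dⁱ·Dʲ ⊆ Dⁱ⁺ʲ`,
`⁅Dⁱ, Dʲ⁆ ⊆ Dⁱ⁺ʲ`, basis `A = D⁰`) which is non-singular and quasi-distinguishing.  Then every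
`Ψ` in the centralizer `C(D)` of `ad(Z(A))` respects the filtration: `Ψ(Dⁱ) ⊆ Dⁱ` for all `i`. -/
theorem statement2 {K D : Type*} [Field K] [CharZero K] [Ring D] [Algebra K D]
    (F : ℕ → Submodule K D)
    (hmono : ∀ i, F i ≤ F (i + 1))
    (hmul : ∀ i j, ∀ a ∈ F i, ∀ b ∈ F j, a * b ∈ F (i + j))
    (hbrk : ∀ i j, ∀ a ∈ F i, ∀ b ∈ F j, ⁅a, b⁆ ∈ F (i + j))
    (hone : (1 : D) ∈ F 0)
    (hunion : ∀ x : D, ∃ i, x ∈ F i)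
    -- the center `Z(A)` of the basis algebra `A = D⁰`
    (ZA : Set D) (hZA : ZA = {u : D | u ∈ F 0 ∧ ∀ a ∈ F 0, u * a = a * u})
    -- non-singularity: there is a Lie subalgebra `D¹_A ⊆ D¹` with `Z(A) = ⁅D¹_A, Z(A)⁆`
    (hnonsing : ∃ L : LieSubalgebra K D, (L : Set D) ⊆ F 1 ∧
      ZA = {x : D | ∃ T ∈ L, ∃ u ∈ ZA, x = ⁅T, u⁆})
    -- quasi-distinguishing
    (hqd0 : ∀ T : D, (∀ u ∈ ZA, ⁅T, u⁆ = 0) → T ∈ F 0)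
    (hqd : ∀ i : ℕ, ∀ T : D, (∀ u ∈ ZA, ⁅T, u⁆ ∈ F i) ↔ T ∈ F (i + 1))
    -- an element of the centralizer `C(D)` of `ad(Z(A))`
    (Ψ : D →ₗ[K] D)
    (hΨ : ∀ T : D, ∀ u ∈ ZA, Ψ ⁅T, u⁆ = ⁅Ψ T, u⁆) :
    ∀ i : ℕ, ∀ T ∈ F i, Ψ T ∈ F i :=
  statement2_general F ZA hZA hqd0 hqd Ψ hΨ
end

section
/- Let D be a quasi quantum Poisson algebra that is non-singular and quasi-distinguishing with basis algebra A. Then every Ψ in the centralizer C(D) of ad(Z(A)) satisfies Ψ(u) = Ψ(1)·u for all u ∈ Z(A). -/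
attribute [local instance 100] LieRing.ofAssociativeRing

/-!
Write `δ = ⁅T, ·⁆` for an element `T` with `δ(Z) ⊆ Z` and `δ u₀ = 1`, and `B(a, v) = Ψ(a v) - Ψ(a) v`.
Applying the centralizer property of `Ψ` to `⁅a T, u v⁆ = (a δu) v + (a δv) u` and using that
`Ψ(Z)` commutes with `Z` gives `B(a δu, v) + B(a δv, u) = 0`. Taking `u = v = u₀` yields
`2 B(a, u₀) = 0`, so `B(·, u₀)` vanishes on `Z`; taking `u = u₀` then yields `B(a, v) = 0`, and
`a = 1` is the claim.
-/

section

variable {D : Type*} [Ring D]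

theorem lie_mul_right (S u v : D) : ⁅S, u * v⁆ = ⁅S, u⁆ * v + u * ⁅S, v⁆ := by
  simp only [Ring.lie_def]
  noncomm_ring

theorem Commute.lie_mul_left {a w : D} (h : Commute a w) (S : D) : ⁅a * S, w⁆ = a * ⁅S, w⁆ := by
  rw [Ring.lie_def, Ring.lie_def, mul_sub, ← mul_assoc w, ← h.eq, mul_assoc, mul_assoc]

variable {Z : Submonoid D} (hZ : ∀ u ∈ Z, ∀ v ∈ Z, Commute u v)
  {Ψ : D →+ D} (hΨ : ∀ T, ∀ u ∈ Z, Ψ ⁅T, u⁆ = ⁅Ψ T, u⁆)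
include hZ hΨ

theorem commute_map_of_mem {q u : D} (hq : q ∈ Z) (hu : u ∈ Z) : Commute (Ψ q) u := by
  rw [commute_iff_lie_eq, ← hΨ q u hu, (hZ q hq u hu).lie_eq, map_zero]

theorem map_mul_lie_mul_add_map_mul_lie_mul {T : D} (hT : ∀ u ∈ Z, ⁅T, u⁆ ∈ Z)
    {a u v : D} (ha : a ∈ Z) (hu : u ∈ Z) (hv : v ∈ Z) :
    Ψ (a * ⁅T, u⁆ * v) + Ψ (a * ⁅T, v⁆ * u) = Ψ (a * ⁅T, u⁆) * v + Ψ (a * ⁅T, v⁆) * u := by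
  have hbracket : ⁅a * T, u * v⁆ = a * ⁅T, u⁆ * v + a * ⁅T, v⁆ * u := by
    rw [(hZ a ha _ (Z.mul_mem hu hv)).lie_mul_left, lie_mul_right, mul_add, mul_assoc,
      (hZ u hu _ (hT v hv)).eq, mul_assoc]
  have hmap : ⁅Ψ (a * T), u * v⁆ = Ψ (a * ⁅T, u⁆) * v + Ψ (a * ⁅T, v⁆) * u := by
    rw [lie_mul_right, ← hΨ _ u hu, ← hΨ _ v hv, (hZ a ha u hu).lie_mul_left,
      (hZ a ha v hv).lie_mul_left,
      (commute_map_of_mem hZ hΨ (Z.mul_mem ha (hT v hv)) hu).symm.eq]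
  rw [← map_add, ← hbracket, hΨ _ _ (Z.mul_mem hu hv), hmap]

theorem map_mul_of_lie_eq_one [IsAddTorsionFree D] {T u₀ : D} (hT : ∀ u ∈ Z, ⁅T, u⁆ ∈ Z)
    (hu₀ : u₀ ∈ Z) (hTu₀ : ⁅T, u₀⁆ = 1) {a v : D} (ha : a ∈ Z) (hv : v ∈ Z) :
    Ψ (a * v) = Ψ a * v := by
  have hu₀_right : ∀ b ∈ Z, Ψ (b * u₀) = Ψ b * u₀ := by
    intro b hb
    have h := map_mul_lie_mul_add_map_mul_lie_mul hZ hΨ hT hb hu₀ hu₀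
    rw [hTu₀, mul_one, ← two_nsmul, ← two_nsmul] at h
    exact nsmul_right_injective two_ne_zero h
  have h := map_mul_lie_mul_add_map_mul_lie_mul hZ hΨ hT ha hu₀ hv
  rwa [hTu₀, mul_one, hu₀_right _ (Z.mul_mem ha (hT v hv)), add_left_inj] at h

end

theorem statement3_general {K D : Type*} [Field K] [CharZero K] [Ring D] [Algebra K D]
    (F : ℕ → Submodule K D)
    (hmul : ∀ i j, ∀ a ∈ F i, ∀ b ∈ F j, a * b ∈ F (i + j))
    (hone : (1 : D) ∈ F 0)
    -- the center `Z(A)` of the basis algebra `A = D⁰`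
    (ZA : Set D) (hZA : ZA = {u : D | u ∈ F 0 ∧ ∀ a ∈ F 0, u * a = a * u})
    -- non-singularity: there is a Lie subalgebra `D¹_A ⊆ D¹` with `Z(A) = ⁅D¹_A, Z(A)⁆`
    (hnonsing : ∃ L : LieSubalgebra K D, (L : Set D) ⊆ F 1 ∧
      ZA = {x : D | ∃ T ∈ L, ∃ u ∈ ZA, x = ⁅T, u⁆})
    -- an element of the centralizer `C(D)` of `ad(Z(A))`
    (Ψ : D →ₗ[K] D)
    (hΨ : ∀ T : D, ∀ u ∈ ZA, Ψ ⁅T, u⁆ = ⁅Ψ T, u⁆) :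
    ∀ u ∈ ZA, Ψ u = Ψ 1 * u := by
  have : IsAddTorsionFree D := .of_isTorsionFree K D
  let A : Submonoid D := ⟨⟨F 0, fun ha hb => hmul 0 0 _ ha _ hb⟩, hone⟩
  set Z : Submonoid D := A ⊓ Submonoid.centralizer A
  have hZ : (Z : Set D) = ZA := by
    ext u
    simp [Z, hZA, A, Set.mem_centralizer_iff, eq_comm]
  subst hZ
  have hcomm : ∀ u ∈ Z, ∀ v ∈ Z, Commute u v :=
    fun u hu v hv => Submonoid.mem_centralizer_iff.mp hv.2 u hu.1
  obtain ⟨L, -, hL⟩ := hnonsing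
  obtain ⟨T, hT, u₀, hu₀, h1⟩ := hL.subset Z.one_mem
  intro u hu
  simpa using map_mul_of_lie_eq_one hcomm (Ψ := Ψ.toAddMonoidHom) hΨ
    (fun v hv => hL.symm.subset ⟨T, hT, v, hv, rfl⟩) hu₀ h1.symm Z.one_mem hu

/-- Let `D = ⋃ᵢ Dⁱ` be a quasi quantum Poisson algebra (a filtered associative unital
algebra over a field `K` of characteristic `0` with `Dⁱ ⊆ Dⁱ⁺¹`, `Dⁱ·Dʲ ⊆ Dⁱ⁺ʲ`,
`⁅Dⁱ, Dʲ⁆ ⊆ Dⁱ⁺ʲ`, basis `A = D⁰`) which is non-singular and quasi-distinguishing.  Then every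
`Ψ` in the centralizer `C(D)` of `ad(Z(A))` satisfies `Ψ(u) = Ψ(1)·u` for all `u ∈ Z(A)`. -/
theorem statement3 {K D : Type*} [Field K] [CharZero K] [Ring D] [Algebra K D]
    (F : ℕ → Submodule K D)
    (hmono : ∀ i, F i ≤ F (i + 1))
    (hmul : ∀ i j, ∀ a ∈ F i, ∀ b ∈ F j, a * b ∈ F (i + j))
    (hbrk : ∀ i j, ∀ a ∈ F i, ∀ b ∈ F j, ⁅a, b⁆ ∈ F (i + j))
    (hone : (1 : D) ∈ F 0)
    (hunion : ∀ x : D, ∃ i, x ∈ F i)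
    -- the center `Z(A)` of the basis algebra `A = D⁰`
    (ZA : Set D) (hZA : ZA = {u : D | u ∈ F 0 ∧ ∀ a ∈ F 0, u * a = a * u})
    -- non-singularity: there is a Lie subalgebra `D¹_A ⊆ D¹` with `Z(A) = ⁅D¹_A, Z(A)⁆`
    (hnonsing : ∃ L : LieSubalgebra K D, (L : Set D) ⊆ F 1 ∧
      ZA = {x : D | ∃ T ∈ L, ∃ u ∈ ZA, x = ⁅T, u⁆})
    -- quasi-distinguishing
    (hqd0 : ∀ T : D, (∀ u ∈ ZA, ⁅T, u⁆ = 0) → T ∈ F 0)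
    (hqd : ∀ i : ℕ, ∀ T : D, (∀ u ∈ ZA, ⁅T, u⁆ ∈ F i) ↔ T ∈ F (i + 1))
    -- an element of the centralizer `C(D)` of `ad(Z(A))`
    (Ψ : D →ₗ[K] D)
    (hΨ : ∀ T : D, ∀ u ∈ ZA, Ψ ⁅T, u⁆ = ⁅Ψ T, u⁆) :
    ∀ u ∈ ZA, Ψ u = Ψ 1 * u :=
  statement3_general F hmul hone ZA hZA hnonsing Ψ hΨ
end

section
/- Let D₁, D₂ be quasi quantum Poisson algebras over a field K of characteristic 0, both non-singular and quasi-distinguishing with bases A₁, A₂. Let Φ : D₁ → D₂ be a Lie algebra isomorphism with Φ(Z(A₁)) = Z(A₂). Then Φ respects the filtration (Φ(D₁^i) ⊆ D₂^i for all i), Φ restricts to a Lie algebra isomorphism A₁ → A₂, and there exist an invertible central element κ ∈ D₂ and an associative algebra isomorphism Ψ : Z(A₁) → Z(A₂) such that Φ|_{Z(A₁)} = κΨ. -/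
attribute [local instance 100] LieRing.ofAssociativeRing

/-!
Filtration: an element `T` lies in `D^{i+1}` iff `[T, Z(A)] ⊆ D^i`, and `Φ` carries `Z(A₁)` onto
`Z(A₂)` while preserving brackets, so `Φ(D₁^i) ⊆ D₂^i` by induction on `i`; the same argument for
`Φ⁻¹` in degree `0` gives `Φ(A₁) = A₂`.

Multiplicativity: pull the product of `D₂` back along `Φ` to `g(a, b) = Φ⁻¹(Φ a · Φ b)`. Since
`Φ` conjugates inner derivations to inner derivations, `ad X` satisfies the Leibniz rule for `g`.
Non-singularity gives `S` with `[S, Z(A₁)] ⊆ Z(A₁)` and `z₀ ∈ Z(A₁)` with `[S, z₀] = 1`, and for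
`u ∈ Z(A₁)` the derivations `ad (u S) = u · ad S` of `Z(A₁)` already force `g(a, b) = c a b` with
`c = g(1, 1)`: the defect `h(a, b) = g(a, b) - c a b` vanishes at `(1, z₀)`, the Leibniz rule for
`(u, z₀, z₀)` gives `2 h(u, z₀) = u [S, h(z₀, z₀)]`, which vanishes by the case `u = 1`, and then
the one for `(u, a, z₀)` gives `h(a, u) = 0`. Finally `κ = Φ 1` is central because `1` is, and
invertible because `κ Φ(w²) = Φ(w)² = 1` for `w = Φ⁻¹(1) ∈ Z(A₁)`.
-/

theorem Ring.lie_mul_right {R : Type*} [Ring R] (x a b : R) :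
    ⁅x, a * b⁆ = ⁅x, a⁆ * b + a * ⁅x, b⁆ := by
  simp only [Ring.lie_def]
  noncomm_ring

theorem Ring.lie_mul_left_of_commute {R : Type*} [Ring R] {u w : R} (T : R) (h : Commute u w) :
    ⁅u * T, w⁆ = u * ⁅T, w⁆ := by
  rw [Ring.lie_def, Ring.lie_def, mul_sub, mul_assoc, ← mul_assoc w, ← h.eq, mul_assoc]

section CenterIn

variable {R : Type*}

def centerIn [Mul R] (A : Set R) : Set R := {u | u ∈ A ∧ ∀ a ∈ A, u * a = a * u}

theorem one_mem_centerIn [MulOneClass R] {A : Set R} (h : (1 : R) ∈ A) : (1 : R) ∈ centerIn A :=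
  ⟨h, fun a _ => by rw [one_mul, mul_one]⟩

theorem mul_mem_centerIn [Semigroup R] {A : Set R} (hA : ∀ a ∈ A, ∀ b ∈ A, a * b ∈ A)
    {u v : R} (hu : u ∈ centerIn A) (hv : v ∈ centerIn A) : u * v ∈ centerIn A :=
  ⟨hA u hu.1 v hv.1, fun a ha => by rw [mul_assoc, hv.2 a ha, ← mul_assoc, hu.2 a ha, mul_assoc]⟩

theorem commute_of_mem_centerIn [Mul R] {A : Set R} {u v : R} (hu : u ∈ centerIn A)
    (hv : v ∈ centerIn A) : Commute u v :=
  hu.2 v hv.1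

theorem lie_eq_zero_of_mem_centerIn [Ring R] {A : Set R} {T u : R} (hT : T ∈ A)
    (hu : u ∈ centerIn A) : ⁅T, u⁆ = 0 :=
  Commute.lie_eq (hu.2 T hT).symm

end CenterIn

section LeibnizPairing

variable {D : Type*} [Ring D] {Z : Set D} {S z₀ : D}

theorem eq_zero_of_mul_lie_leibniz [IsAddTorsionFree D] (one_mem : (1 : D) ∈ Z)
    (mul_mem : ∀ a ∈ Z, ∀ b ∈ Z, a * b ∈ Z) (hS : ∀ a ∈ Z, ⁅S, a⁆ ∈ Z) (hz₀ : z₀ ∈ Z)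
    (hSz₀ : ⁅S, z₀⁆ = 1) {h : D → D → D} (h_symm : ∀ a ∈ Z, ∀ b ∈ Z, h a b = h b a)
    (h_one : h 1 z₀ = 0)
    (h_lie : ∀ u ∈ Z, ∀ a ∈ Z, ∀ b ∈ Z,
      u * ⁅S, h a b⁆ = h (u * ⁅S, a⁆) b + h a (u * ⁅S, b⁆)) :
    ∀ a ∈ Z, ∀ b ∈ Z, h a b = 0 := by
  have mul_lie_eq_two_nsmul : ∀ u ∈ Z, u * ⁅S, h z₀ z₀⁆ = 2 • h u z₀ := fun u hu => by
    rw [h_lie u hu z₀ hz₀ z₀ hz₀, hSz₀, mul_one, h_symm z₀ hz₀ u hu, two_nsmul]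
  have lie_h : ⁅S, h z₀ z₀⁆ = 0 := by
    rw [← one_mul ⁅S, h z₀ z₀⁆, mul_lie_eq_two_nsmul 1 one_mem, h_one, smul_zero]
  have h_z₀ : ∀ u ∈ Z, h u z₀ = 0 := fun u hu =>
    two_nsmul_eq_zero.mp (by rw [← mul_lie_eq_two_nsmul u hu, lie_h, mul_zero])
  intro a ha b hb
  have key := h_lie b hb a ha z₀ hz₀
  rwa [h_z₀ a ha, lie_zero, mul_zero, h_z₀ _ (mul_mem b hb _ (hS a ha)), hSz₀, mul_one,
    zero_add, eq_comm] at key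

theorem eq_mul_mul_of_lie_leibniz [IsAddTorsionFree D] (one_mem : (1 : D) ∈ Z)
    (mul_mem : ∀ a ∈ Z, ∀ b ∈ Z, a * b ∈ Z) (comm : ∀ a ∈ Z, ∀ b ∈ Z, Commute a b)
    (hS : ∀ a ∈ Z, ⁅S, a⁆ ∈ Z) (hz₀ : z₀ ∈ Z) (hSz₀ : ⁅S, z₀⁆ = 1) {g : D → D → D}
    (g_mem : ∀ a ∈ Z, ∀ b ∈ Z, g a b ∈ Z) (g_symm : ∀ a ∈ Z, ∀ b ∈ Z, g a b = g b a)
    (g_zero_left : ∀ b, g 0 b = 0) (g_zero_right : ∀ a, g a 0 = 0)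
    (g_lie : ∀ X : D, ∀ a ∈ Z, ∀ b ∈ Z, ⁅X, g a b⁆ = g ⁅X, a⁆ b + g a ⁅X, b⁆) :
    ∀ a ∈ Z, ∀ b ∈ Z, g a b = g 1 1 * (a * b) := by
  have mul_lie : ∀ u ∈ Z, ∀ a ∈ Z, ∀ b ∈ Z,
      u * ⁅S, g a b⁆ = g (u * ⁅S, a⁆) b + g a (u * ⁅S, b⁆) := fun u hu a ha b hb => by
    rw [← Ring.lie_mul_left_of_commute S (comm u hu _ (g_mem a ha b hb)), g_lie _ a ha b hb,
      Ring.lie_mul_left_of_commute S (comm u hu a ha),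
      Ring.lie_mul_left_of_commute S (comm u hu b hb)]
  have lie_one : ⁅S, (1 : D)⁆ = 0 := (Commute.one_right S).lie_eq
  set c := g 1 1 with hc_def
  have hc : c ∈ Z := g_mem 1 one_mem 1 one_mem
  have lie_c : ⁅S, c⁆ = 0 := by
    rw [g_lie S 1 one_mem 1 one_mem, lie_one, g_zero_left, g_zero_right, add_zero]
  have g_one : ∀ u ∈ Z, g 1 u = u * ⁅S, g 1 z₀⁆ := fun u hu => by
    rw [mul_lie u hu 1 one_mem z₀ hz₀, lie_one, mul_zero, g_zero_left, zero_add, hSz₀, mul_one]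
  have hc' : c = ⁅S, g 1 z₀⁆ := by rw [hc_def, g_one 1 one_mem, one_mul]
  have mul_lie_c : ∀ u ∈ Z, ∀ a ∈ Z, ∀ b ∈ Z,
      u * ⁅S, c * (a * b)⁆ = c * (u * ⁅S, a⁆ * b) + c * (a * (u * ⁅S, b⁆)) :=
    fun u hu a ha b hb => by
    rw [Ring.lie_mul_right, lie_c, zero_mul, zero_add, Ring.lie_mul_right,
      (comm u hu c hc).left_comm, mul_add, mul_add, ← mul_assoc u a, (comm u hu a ha).eq,
      mul_assoc, mul_assoc]
  intro a ha b hb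
  refine sub_eq_zero.mp (eq_zero_of_mul_lie_leibniz (h := fun a b => g a b - c * (a * b))
    one_mem mul_mem hS hz₀ hSz₀ ?_ ?_ ?_ a ha b hb)
  · intro a ha b hb
    rw [g_symm a ha b hb, (comm a ha b hb).eq]
  · rw [g_one z₀ hz₀, ← hc', one_mul, (comm z₀ hz₀ c hc).eq, sub_self]
  · intro u hu a ha b hb
    rw [lie_sub, mul_sub, mul_lie u hu a ha b hb, mul_lie_c u hu a ha b hb]
    abel

end LeibnizPairing

namespace LieEquiv

variable {K A B : Type*} [CommRing K] [Ring A] [Algebra K A] [Ring B] [Algebra K B]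
  (Φ : A ≃ₗ⁅K⁆ B)

def pullbackMul (x y : A) : A := Φ.symm (Φ x * Φ y)

theorem apply_pullbackMul (x y : A) : Φ (Φ.pullbackMul x y) = Φ x * Φ y :=
  Φ.apply_symm_apply _

theorem pullbackMul_zero_left (y : A) : Φ.pullbackMul 0 y = 0 := by
  simp [pullbackMul]

theorem pullbackMul_zero_right (x : A) : Φ.pullbackMul x 0 = 0 := by
  simp [pullbackMul]

theorem lie_pullbackMul (X a b : A) :
    ⁅X, Φ.pullbackMul a b⁆ = Φ.pullbackMul ⁅X, a⁆ b + Φ.pullbackMul a ⁅X, b⁆ :=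
  EquivLike.injective Φ <| by
    rw [Φ.map_lie, apply_pullbackMul, Ring.lie_mul_right, map_add, apply_pullbackMul,
      apply_pullbackMul, Φ.map_lie, Φ.map_lie]

theorem commute_apply_one (d : B) : Commute (Φ 1) d := by
  rw [commute_iff_lie_eq, ← Φ.apply_symm_apply d, ← Φ.map_lie, (Commute.one_left _).lie_eq,
    map_zero]

theorem map_mem_of_forall_lie_eq_zero {Z₁ A₀ : Set A} {Z₂ B₀ : Set B} (hZ : Z₂ ⊆ Φ '' Z₁)
    (hA₀ : ∀ T ∈ A₀, ∀ u ∈ Z₁, ⁅T, u⁆ = 0) (hB₀ : ∀ T : B, (∀ u ∈ Z₂, ⁅T, u⁆ = 0) → T ∈ B₀)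
    {T : A} (hT : T ∈ A₀) : Φ T ∈ B₀ :=
  hB₀ _ fun v hv => by
    obtain ⟨u, hu, rfl⟩ := hZ hv
    rw [← Φ.map_lie, hA₀ T hT u hu, map_zero]

theorem map_mem_filtration {Z₁ : Set A} {Z₂ : Set B} {F₁ : ℕ → Set A} {F₂ : ℕ → Set B}
    (hZ : Z₂ ⊆ Φ '' Z₁) (h₀ : ∀ T ∈ F₁ 0, ∀ u ∈ Z₁, ⁅T, u⁆ = 0)
    (hF₁ : ∀ i, ∀ T ∈ F₁ (i + 1), ∀ u ∈ Z₁, ⁅T, u⁆ ∈ F₁ i)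
    (hF₂₀ : ∀ T : B, (∀ u ∈ Z₂, ⁅T, u⁆ = 0) → T ∈ F₂ 0)
    (hF₂ : ∀ i, ∀ T : B, (∀ u ∈ Z₂, ⁅T, u⁆ ∈ F₂ i) → T ∈ F₂ (i + 1)) :
    ∀ i, ∀ T ∈ F₁ i, Φ T ∈ F₂ i
  | 0, _, hT => Φ.map_mem_of_forall_lie_eq_zero hZ h₀ hF₂₀ hT
  | i + 1, T, hT => hF₂ i _ fun v hv => by
    obtain ⟨u, hu, rfl⟩ := hZ hv
    rw [← Φ.map_lie]
    exact map_mem_filtration hZ h₀ hF₁ hF₂₀ hF₂ i _ (hF₁ i T hT u hu)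

theorem image_eq_of_forall_lie_eq_zero {Z₁ A₀ : Set A} {Z₂ B₀ : Set B} (hZ : Φ '' Z₁ = Z₂)
    (hA₀ : ∀ T ∈ A₀, ∀ u ∈ Z₁, ⁅T, u⁆ = 0) (hA₀' : ∀ T : A, (∀ u ∈ Z₁, ⁅T, u⁆ = 0) → T ∈ A₀)
    (hB₀ : ∀ T ∈ B₀, ∀ u ∈ Z₂, ⁅T, u⁆ = 0) (hB₀' : ∀ T : B, (∀ u ∈ Z₂, ⁅T, u⁆ = 0) → T ∈ B₀) :
    Φ '' A₀ = B₀ := by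
  have hZ' : Z₁ ⊆ Φ.symm '' Z₂ := fun u hu =>
    ⟨Φ u, hZ ▸ Set.mem_image_of_mem Φ hu, Φ.symm_apply_apply u⟩
  refine (Set.image_subset_iff.mpr fun _ => Φ.map_mem_of_forall_lie_eq_zero hZ.ge hA₀ hB₀').antisymm
    fun y hy => ⟨Φ.symm y, ?_, Φ.apply_symm_apply y⟩
  exact Φ.symm.map_mem_of_forall_lie_eq_zero hZ' hB₀ hA₀' hy

theorem apply_one_mul_apply_mul [IsAddTorsionFree A] {Z₁ : Set A} {Z₂ : Set B}
    (hZ : Φ '' Z₁ = Z₂) (one_mem : (1 : A) ∈ Z₁) (mul_mem₁ : ∀ a ∈ Z₁, ∀ b ∈ Z₁, a * b ∈ Z₁)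
    (comm₁ : ∀ a ∈ Z₁, ∀ b ∈ Z₁, Commute a b) (mul_mem₂ : ∀ a ∈ Z₂, ∀ b ∈ Z₂, a * b ∈ Z₂)
    (comm₂ : ∀ a ∈ Z₂, ∀ b ∈ Z₂, Commute a b) {S z₀ : A} (hS : ∀ a ∈ Z₁, ⁅S, a⁆ ∈ Z₁)
    (hz₀ : z₀ ∈ Z₁) (hSz₀ : ⁅S, z₀⁆ = 1) {a b : A} (ha : a ∈ Z₁) (hb : b ∈ Z₁) :
    Φ 1 * Φ (a * b) = Φ a * Φ b := by
  have map_mem : ∀ a ∈ Z₁, Φ a ∈ Z₂ := fun a ha => hZ ▸ Set.mem_image_of_mem Φ ha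
  have pullbackMul_mem : ∀ a ∈ Z₁, ∀ b ∈ Z₁, Φ.pullbackMul a b ∈ Z₁ := fun a ha b hb => by
    obtain ⟨w, hw, e⟩ := hZ.ge (mul_mem₂ _ (map_mem a ha) _ (map_mem b hb))
    rwa [pullbackMul, ← e, Φ.symm_apply_apply]
  have hg := eq_mul_mul_of_lie_leibniz one_mem mul_mem₁ comm₁ hS hz₀ hSz₀ pullbackMul_mem
    (fun a ha b hb => congrArg Φ.symm (comm₂ _ (map_mem a ha) _ (map_mem b hb)).eq)
    Φ.pullbackMul_zero_left Φ.pullbackMul_zero_right fun X a _ b _ => Φ.lie_pullbackMul X a b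
  rw [← apply_pullbackMul, ← apply_pullbackMul, hg 1 one_mem _ (mul_mem₁ a ha b hb),
    hg a ha b hb, one_mul]

theorem isUnit_apply_one {Z₁ : Set A} {Z₂ : Set B} (hZ : Φ '' Z₁ = Z₂) (one_mem : (1 : B) ∈ Z₂)
    (h : ∀ a ∈ Z₁, ∀ b ∈ Z₁, Φ 1 * Φ (a * b) = Φ a * Φ b) : IsUnit (Φ 1) := by
  obtain ⟨w, hw, e⟩ := hZ.ge one_mem
  have hinv : Φ 1 * Φ (w * w) = 1 := by rw [h w hw w hw, e, one_mul]
  exact ((Φ.commute_apply_one _).isUnit_mul_iff.mp (hinv ▸ isUnit_one)).1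

end LieEquiv

theorem statement7_general {K D₁ D₂ : Type*} [Field K] [CharZero K]
    [Ring D₁] [Algebra K D₁] [Ring D₂] [Algebra K D₂]
    (F₁ : ℕ → Submodule K D₁) (F₂ : ℕ → Submodule K D₂)
    (hmul₁ : ∀ i j, ∀ a ∈ F₁ i, ∀ b ∈ F₁ j, a * b ∈ F₁ (i + j))
    (hmul₂ : ∀ i j, ∀ a ∈ F₂ i, ∀ b ∈ F₂ j, a * b ∈ F₂ (i + j))
    (hone₁ : (1 : D₁) ∈ F₁ 0) (hone₂ : (1 : D₂) ∈ F₂ 0)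
    (ZA₁ : Set D₁) (hZA₁ : ZA₁ = {u : D₁ | u ∈ F₁ 0 ∧ ∀ a ∈ F₁ 0, u * a = a * u})
    (ZA₂ : Set D₂) (hZA₂ : ZA₂ = {u : D₂ | u ∈ F₂ 0 ∧ ∀ a ∈ F₂ 0, u * a = a * u})
    (hnonsing₁ : ∃ L : LieSubalgebra K D₁, (L : Set D₁) ⊆ F₁ 1 ∧
      ZA₁ = {x : D₁ | ∃ T ∈ L, ∃ u ∈ ZA₁, x = ⁅T, u⁆})
    (hqd0₁ : ∀ T : D₁, (∀ u ∈ ZA₁, ⁅T, u⁆ = 0) → T ∈ F₁ 0)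
    (hqd₁ : ∀ i : ℕ, ∀ T : D₁, (∀ u ∈ ZA₁, ⁅T, u⁆ ∈ F₁ i) ↔ T ∈ F₁ (i + 1))
    (hqd0₂ : ∀ T : D₂, (∀ u ∈ ZA₂, ⁅T, u⁆ = 0) → T ∈ F₂ 0)
    (hqd₂ : ∀ i : ℕ, ∀ T : D₂, (∀ u ∈ ZA₂, ⁅T, u⁆ ∈ F₂ i) ↔ T ∈ F₂ (i + 1))
    (Φ : D₁ ≃ₗ⁅K⁆ D₂)
    (hΦZ : Φ '' ZA₁ = ZA₂) :
    (∀ i : ℕ, ∀ T ∈ F₁ i, Φ T ∈ F₂ i) ∧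
    (Φ '' (F₁ 0 : Set D₁) = (F₂ 0 : Set D₂)) ∧
    (∃ κ : D₂, (∀ d : D₂, κ * d = d * κ) ∧ IsUnit κ ∧
      ∀ u ∈ ZA₁, ∀ v ∈ ZA₁, κ * Φ (u * v) = Φ u * Φ v) := by
  have : IsAddTorsionFree D₁ := .of_isTorsionFree K D₁
  replace hZA₁ : ZA₁ = centerIn (F₁ 0 : Set D₁) := hZA₁
  replace hZA₂ : ZA₂ = centerIn (F₂ 0 : Set D₂) := hZA₂
  have one_mem₁ : (1 : D₁) ∈ ZA₁ := hZA₁ ▸ one_mem_centerIn hone₁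
  have one_mem₂ : (1 : D₂) ∈ ZA₂ := hZA₂ ▸ one_mem_centerIn hone₂
  have mul_mem₁ : ∀ a ∈ ZA₁, ∀ b ∈ ZA₁, a * b ∈ ZA₁ :=
    hZA₁ ▸ fun _ ha _ hb => mul_mem_centerIn (hmul₁ 0 0) ha hb
  have mul_mem₂ : ∀ a ∈ ZA₂, ∀ b ∈ ZA₂, a * b ∈ ZA₂ :=
    hZA₂ ▸ fun _ ha _ hb => mul_mem_centerIn (hmul₂ 0 0) ha hb
  have comm₁ : ∀ a ∈ ZA₁, ∀ b ∈ ZA₁, Commute a b :=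
    hZA₁ ▸ fun _ ha _ hb => commute_of_mem_centerIn ha hb
  have comm₂ : ∀ a ∈ ZA₂, ∀ b ∈ ZA₂, Commute a b :=
    hZA₂ ▸ fun _ ha _ hb => commute_of_mem_centerIn ha hb
  have lie_eq_zero₁ : ∀ T ∈ (F₁ 0 : Set D₁), ∀ u ∈ ZA₁, ⁅T, u⁆ = 0 :=
    hZA₁ ▸ fun _ hT _ hu => lie_eq_zero_of_mem_centerIn hT hu
  have lie_eq_zero₂ : ∀ T ∈ (F₂ 0 : Set D₂), ∀ u ∈ ZA₂, ⁅T, u⁆ = 0 :=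
    hZA₂ ▸ fun _ hT _ hu => lie_eq_zero_of_mem_centerIn hT hu
  obtain ⟨L, -, hL⟩ := hnonsing₁
  obtain ⟨S, hS, z₀, hz₀, hSz₀⟩ := hL ▸ one_mem₁
  have hκ : ∀ u ∈ ZA₁, ∀ v ∈ ZA₁, Φ 1 * Φ (u * v) = Φ u * Φ v := fun _ hu _ hv =>
    Φ.apply_one_mul_apply_mul hΦZ one_mem₁ mul_mem₁ comm₁ mul_mem₂ comm₂
      (fun a ha => hL ▸ ⟨S, hS, a, ha, rfl⟩) hz₀ hSz₀.symm hu hv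
  exact ⟨Φ.map_mem_filtration hΦZ.ge lie_eq_zero₁ (fun i T hT => (hqd₁ i T).mpr hT) hqd0₂
      (fun i T => (hqd₂ i T).mp),
    Φ.image_eq_of_forall_lie_eq_zero hΦZ lie_eq_zero₁ hqd0₁ lie_eq_zero₂ hqd0₂,
    Φ 1, fun d => (Φ.commute_apply_one d).eq, Φ.isUnit_apply_one hΦZ one_mem₂ hκ, hκ⟩

/-- Let `D₁, D₂` be quasi quantum Poisson algebras over a field `K` of characteristic
`0`, both non-singular and quasi-distinguishing, with bases `A₁ = D₁⁰`, `A₂ = D₂⁰`.  Let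
`Φ : D₁ → D₂` be a Lie algebra isomorphism with `Φ(Z(A₁)) = Z(A₂)`.  Then `Φ` respects the
filtration, restricts to a Lie algebra isomorphism `A₁ → A₂` (i.e. `Φ(A₁) = A₂`), and there are
an invertible central element `κ ∈ D₂` and an associative algebra isomorphism
`Ψ : Z(A₁) → Z(A₂)` with `Φ|_{Z(A₁)} = κΨ` (equivalently `κ·Φ(uv) = Φ(u)·Φ(v)` on `Z(A₁)`). -/
theorem statement7 {K D₁ D₂ : Type*} [Field K] [CharZero K]
    [Ring D₁] [Algebra K D₁] [Ring D₂] [Algebra K D₂]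
    (F₁ : ℕ → Submodule K D₁) (F₂ : ℕ → Submodule K D₂)
    (hmono₁ : ∀ i, F₁ i ≤ F₁ (i + 1)) (hmono₂ : ∀ i, F₂ i ≤ F₂ (i + 1))
    (hmul₁ : ∀ i j, ∀ a ∈ F₁ i, ∀ b ∈ F₁ j, a * b ∈ F₁ (i + j))
    (hmul₂ : ∀ i j, ∀ a ∈ F₂ i, ∀ b ∈ F₂ j, a * b ∈ F₂ (i + j))
    (hbrk₁ : ∀ i j, ∀ a ∈ F₁ i, ∀ b ∈ F₁ j, ⁅a, b⁆ ∈ F₁ (i + j))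
    (hbrk₂ : ∀ i j, ∀ a ∈ F₂ i, ∀ b ∈ F₂ j, ⁅a, b⁆ ∈ F₂ (i + j))
    (hone₁ : (1 : D₁) ∈ F₁ 0) (hone₂ : (1 : D₂) ∈ F₂ 0)
    (hunion₁ : ∀ x : D₁, ∃ i, x ∈ F₁ i) (hunion₂ : ∀ x : D₂, ∃ i, x ∈ F₂ i)
    (ZA₁ : Set D₁) (hZA₁ : ZA₁ = {u : D₁ | u ∈ F₁ 0 ∧ ∀ a ∈ F₁ 0, u * a = a * u})
    (ZA₂ : Set D₂) (hZA₂ : ZA₂ = {u : D₂ | u ∈ F₂ 0 ∧ ∀ a ∈ F₂ 0, u * a = a * u})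
    (hnonsing₁ : ∃ L : LieSubalgebra K D₁, (L : Set D₁) ⊆ F₁ 1 ∧
      ZA₁ = {x : D₁ | ∃ T ∈ L, ∃ u ∈ ZA₁, x = ⁅T, u⁆})
    (hnonsing₂ : ∃ L : LieSubalgebra K D₂, (L : Set D₂) ⊆ F₂ 1 ∧
      ZA₂ = {x : D₂ | ∃ T ∈ L, ∃ u ∈ ZA₂, x = ⁅T, u⁆})
    (hqd0₁ : ∀ T : D₁, (∀ u ∈ ZA₁, ⁅T, u⁆ = 0) → T ∈ F₁ 0)
    (hqd₁ : ∀ i : ℕ, ∀ T : D₁, (∀ u ∈ ZA₁, ⁅T, u⁆ ∈ F₁ i) ↔ T ∈ F₁ (i + 1))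
    (hqd0₂ : ∀ T : D₂, (∀ u ∈ ZA₂, ⁅T, u⁆ = 0) → T ∈ F₂ 0)
    (hqd₂ : ∀ i : ℕ, ∀ T : D₂, (∀ u ∈ ZA₂, ⁅T, u⁆ ∈ F₂ i) ↔ T ∈ F₂ (i + 1))
    (Φ : D₁ ≃ₗ⁅K⁆ D₂)
    (hΦZ : Φ '' ZA₁ = ZA₂) :
    (∀ i : ℕ, ∀ T ∈ F₁ i, Φ T ∈ F₂ i) ∧
    (Φ '' (F₁ 0 : Set D₁) = (F₂ 0 : Set D₂)) ∧
    (∃ κ : D₂, (∀ d : D₂, κ * d = d * κ) ∧ IsUnit κ ∧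
      ∀ u ∈ ZA₁, ∀ v ∈ ZA₁, κ * Φ (u * v) = Φ u * Φ v) :=
  statement7_general F₁ F₂ hmul₁ hmul₂ hone₁ hone₂ ZA₁ hZA₁ ZA₂ hZA₂ hnonsing₁ hqd0₁ hqd₁ hqd0₂ hqd₂
    Φ hΦZ
end
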